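/- For all 0 ≤ t ≤ 1 such that p⁻(t) ≤ 1/2, P( σ̂²_med ≤ βσ² − σ²β t ) ≤ exp( (K_f/2) · ln( 4 p⁻(t)(1 − p⁻(t)) ) ), where p⁻(t) = P( Γ_{n_0} ≤ n_0 − n_0 t ) and Γ_{n_0} ~ χ²(n_0). -/

import Mathlib

/-!
If the sample median is at most `a = β σ² (1 - t)`, then at least half of the `c k` are at
most `a`. After rescaling, the event `c k ≤ a` reads `Γ_{n_k} ≤ (n_k / n_∞) n₀ (1 - t)`, which
implies `Γ_{n_k} ≤ n₀ (1 - t)`, and the χ² CDF decreases in the number of degrees of freedom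
(the ratio of two gamma densities is a multiple of a power of `x`, so it crosses `1` only
once); hence each event has probability at most `p⁻(t)`. The Chernoff bound for the number of
these independent events, at the parameter `λ = log ((1 - p) / p)`, gives
`(4 p (1 - p)) ^ (K / 2)`.
-/

open MeasureTheory ProbabilityTheory Real
open scoped ENNReal

/-- The sample median of `m` real values: the middle order statistic if `m` is odd,
the average of the two middle order statistics if `m` is even. -/
noncomputable def sampleMedian {m : ℕ} (x : Fin m → ℝ) : ℝ :=
  let l := List.insertionSort (· ≤ ·) (List.ofFn x)
  if m % 2 = 1 then l.getD (m / 2) 0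
  else (l.getD (m / 2 - 1) 0 + l.getD (m / 2) 0) / 2

open Finset

theorem List.countP_ofFn {α : Type*} {m : ℕ} (x : Fin m → α) (p : α → Prop) [DecidablePred p] :
    (List.ofFn x).countP (p ·) = #{k | p (x k)} := by
  induction m with
  | zero => simp
  | succ n ih =>
    rw [List.ofFn_succ, List.countP_cons, ih, card_filter, card_filter, Fin.sum_univ_succ, add_comm]
    simp only [decide_eq_true_eq]

theorem List.SortedLE.succ_le_countP_le {l : List ℝ} (hl : l.SortedLE) {j : ℕ}
    (hj : j < l.length) {a : ℝ} (h : l[j] ≤ a) : j + 1 ≤ l.countP (· ≤ a) := by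
  have htake : (l.take (j + 1)).countP (· ≤ a) = j + 1 := by
    rw [List.countP_eq_length.mpr, List.length_take, min_eq_left hj]
    intro b hb
    obtain ⟨i, hi, rfl⟩ := List.mem_take_iff_getElem.mp hb
    have hij : i ≤ j := by omega
    simpa using (hl.getElem_le_getElem_of_le hij).trans h
  exact htake ▸ (List.take_sublist _ _).countP_le

theorem card_le_of_sampleMedian_le {m : ℕ} (x : Fin m → ℝ) {a : ℝ} (h : sampleMedian x ≤ a) :
    (m : ℝ) / 2 ≤ #{k | x k ≤ a} := by
  set l := List.insertionSort (· ≤ ·) (List.ofFn x) with hl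
  have hlen : l.length = m := by rw [List.length_insertionSort, List.length_ofFn]
  have hsort : l.SortedLE := List.sortedLE_insertionSort
  have hcount : ∀ j (hj : j < l.length), l[j] ≤ a → (j : ℝ) + 1 ≤ #{k | x k ≤ a} := by
    intro j hj hja
    rw [← List.countP_ofFn x (· ≤ a), ← (List.perm_insertionSort (· ≤ ·) _).countP_eq]
    exact_mod_cast hsort.succ_le_countP_le hj hja
  simp only [sampleMedian, ← hl] at h
  split_ifs at h with hodd
  · have hj : m / 2 < l.length := by omega
    rw [List.getD_eq_getElem l 0 hj] at h
    have hm : (m : ℝ) = 2 * (m / 2 : ℕ) + 1 := by exact_mod_cast (by omega : m = 2 * (m / 2) + 1)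
    linarith [hcount _ hj h]
  · rcases Nat.eq_zero_or_pos m with rfl | hm0
    · simp
    have hj : m / 2 - 1 < l.length := by omega
    have hj' : m / 2 < l.length := by omega
    rw [List.getD_eq_getElem l 0 hj, List.getD_eq_getElem l 0 hj'] at h
    have hmono : l[m / 2 - 1] ≤ l[m / 2] := hsort.getElem_le_getElem_of_le (by omega)
    have hm : (m : ℝ) = 2 * ((m / 2 - 1 : ℕ) + 1) := by
      exact_mod_cast (by omega : m = 2 * (m / 2 - 1 + 1))
    linarith [hcount _ hj (by linarith)]

open Set in
theorem withDensity_Iic_le_of_single_crossing {μ : Measure ℝ} {f g : ℝ → ℝ≥0∞}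
    [IsProbabilityMeasure (μ.withDensity f)] [IsProbabilityMeasure (μ.withDensity g)] (τ : ℝ)
    (hle : ∀ᵐ x ∂μ, x ≤ τ → g x ≤ f x) (hge : ∀ᵐ x ∂μ, τ < x → f x ≤ g x) (s : ℝ) :
    μ.withDensity g (Iic s) ≤ μ.withDensity f (Iic s) := by
  rcases le_or_gt s τ with hs | hs
  · rw [withDensity_apply _ measurableSet_Iic, withDensity_apply _ measurableSet_Iic]
    refine lintegral_mono_ae ?_
    filter_upwards [ae_restrict_mem measurableSet_Iic, ae_restrict_of_ae hle] with x hx h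
    exact h (le_trans hx hs)
  · rw [← compl_Ioi, prob_compl_eq_one_sub measurableSet_Ioi,
      prob_compl_eq_one_sub measurableSet_Ioi]
    gcongr 1 - ?_
    rw [withDensity_apply _ measurableSet_Ioi, withDensity_apply _ measurableSet_Ioi]
    refine lintegral_mono_ae ?_
    filter_upwards [ae_restrict_mem measurableSet_Ioi, ae_restrict_of_ae hge] with x hx h
    exact h (hs.trans hx)

theorem gammaPDFReal_add_shape {a d r x : ℝ} (ha : 0 < a) (hr : 0 < r) (hx : 0 < x) :
    gammaPDFReal (a + d) r x = r ^ d * Gamma a / Gamma (a + d) * x ^ d * gammaPDFReal a r x := by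
  have hΓ : Gamma a ≠ 0 := (Gamma_pos_of_pos ha).ne'
  simp only [gammaPDFReal, if_pos hx.le, rpow_add hr, show a + d - 1 = d + (a - 1) by ring,
    rpow_add hx]
  field_simp

open Set in
theorem gammaMeasure_Iic_le_of_le_shape {a a' r : ℝ} (ha : 0 < a) (haa' : a ≤ a') (hr : 0 < r)
    (s : ℝ) : gammaMeasure a' r (Iic s) ≤ gammaMeasure a r (Iic s) := by
  obtain ⟨d, hd, rfl⟩ : ∃ d, 0 ≤ d ∧ a' = a + d := ⟨a' - a, by linarith, by ring⟩
  rcases hd.eq_or_lt with rfl | hd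
  · simp
  have : IsProbabilityMeasure (volume.withDensity (gammaPDF a r)) :=
    isProbabilityMeasure_gammaMeasure ha hr
  have : IsProbabilityMeasure (volume.withDensity (gammaPDF (a + d) r)) :=
    isProbabilityMeasure_gammaMeasure (by linarith) hr
  set C := r ^ d * Gamma a / Gamma (a + d)
  have hC : 0 < C := by
    have := Gamma_pos_of_pos ha
    have := Gamma_pos_of_pos (by linarith : 0 < a + d)
    positivity
  -- the likelihood ratio `C x ^ d` of the two densities crosses `1` exactly at `τ`
  set τ := C ^ (-d⁻¹)
  have hτ : 0 < τ := rpow_pos_of_pos hC _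
  have hCτ : C * τ ^ d = 1 := by
    rw [← rpow_mul hC.le, neg_mul, inv_mul_cancel₀ hd.ne', rpow_neg_one, mul_inv_cancel₀ hC.ne']
  refine withDensity_Iic_le_of_single_crossing τ ?_ (ae_of_all _ fun x hx => ?_) s
  · filter_upwards [volume.ae_ne 0] with x hx0 hxτ
    rcases hx0.lt_or_gt with hneg | hpos
    · simp [gammaPDF_of_neg hneg]
    refine ENNReal.ofReal_le_ofReal ?_
    rw [gammaPDFReal_add_shape ha hr hpos]
    refine mul_le_of_le_one_left (gammaPDFReal_nonneg ha hr x) ?_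
    calc C * x ^ d ≤ C * τ ^ d := by gcongr
      _ = 1 := hCτ
  · have hx0 : 0 < x := hτ.trans hx
    refine ENNReal.ofReal_le_ofReal ?_
    rw [gammaPDFReal_add_shape ha hr hx0]
    refine le_mul_of_one_le_left (gammaPDFReal_nonneg ha hr x) ?_
    calc 1 = C * τ ^ d := hCτ.symm
      _ ≤ C * x ^ d := by gcongr

open Set in
theorem map_mul_gammaMeasure_Iic_le {σ : ℝ} (hσ : σ ≠ 0) {n n0 ninf : ℕ} (hn0 : 1 ≤ n0)
    (hn0n : n0 ≤ n) (hnninf : n ≤ ninf) {t : ℝ} (ht1 : t ≤ 1) :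
    Measure.map (fun x => σ ^ 2 / n * x) (gammaMeasure (n / 2) (1 / 2))
        (Iic ((n0 : ℝ) / ninf * σ ^ 2 - σ ^ 2 * ((n0 : ℝ) / ninf) * t))
      ≤ gammaMeasure (n0 / 2) (1 / 2) (Iic (n0 - n0 * t)) := by
  have hn0' : (1 : ℝ) ≤ n0 := by exact_mod_cast hn0
  have hn0n' : (n0 : ℝ) ≤ n := by exact_mod_cast hn0n
  have hnninf' : (n : ℝ) ≤ ninf := by exact_mod_cast hnninf
  have hσ2 : 0 < σ ^ 2 := by positivity
  rw [Measure.map_apply (by fun_prop) measurableSet_Iic]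
  calc gammaMeasure (n / 2) (1 / 2) _ ≤ gammaMeasure (n / 2) (1 / 2) (Iic (n0 - n0 * t)) := by
        refine measure_mono fun x (hx : σ ^ 2 / n * x ≤ _) => ?_
        have hn : (0 : ℝ) < n := by linarith
        have hx' : σ ^ 2 / n * x ≤ σ ^ 2 / n * (n * (n0 / ninf) * (1 - t)) := by
          convert hx using 1
          field_simp
        have hratio : n * ((n0 : ℝ) / ninf) ≤ n0 := by
          rw [mul_div_assoc', div_le_iff₀ (by linarith), mul_comm]
          gcongr
        show x ≤ n0 - n0 * t
        nlinarith [le_of_mul_le_mul_left hx' (by positivity)]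
    _ ≤ gammaMeasure (n0 / 2) (1 / 2) (Iic (n0 - n0 * t)) :=
      gammaMeasure_Iic_le_of_le_shape (by positivity) (by linarith) (by norm_num) _

theorem exp_neg_log_odds_mul_pow {p : ℝ} (hp0 : 0 < p) (hp1 : p < 1) (n : ℕ) :
    exp (-log ((1 - p) / p) * (n / 2)) * (1 + p * (exp (log ((1 - p) / p)) - 1)) ^ n
      = exp (n / 2 * log (4 * p * (1 - p))) := by
  have h1p : 0 < 1 - p := by linarith
  have hbase : 1 + p * (exp (log ((1 - p) / p)) - 1) = exp (log 2 + log (1 - p)) := by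
    rw [exp_log (div_pos h1p hp0), exp_add, exp_log two_pos, exp_log h1p]
    field_simp
    ring
  rw [hbase, ← exp_nat_mul, ← exp_add, log_div h1p.ne' hp0.ne',
    log_mul (by positivity) h1p.ne', log_mul (by norm_num) hp0.ne',
    show (4 : ℝ) = 2 ^ 2 by norm_num, log_pow]
  congr 1
  push_cast
  ring

section BernoulliCount

variable {Ω ι : Type*} {mΩ : MeasurableSpace Ω} {μ : Measure Ω} [IsProbabilityMeasure μ]

theorem mgf_indicator_one {A : Set Ω} (hA : MeasurableSet A) (t : ℝ) :
    mgf (A.indicator 1) μ t = 1 + μ.real A * (exp t - 1) := by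
  have hexp : (fun ω => exp (t * A.indicator 1 ω))
      = fun ω => A.indicator (fun _ => exp t - 1) ω + 1 := by
    ext ω
    by_cases hω : ω ∈ A <;> simp [hω]
  rw [mgf, hexp, integral_add ((integrable_const _).indicator hA) (integrable_const _),
    integral_indicator_const _ hA, integral_const]
  simp [add_comm]

theorem measureReal_le_card_filter_mem_le [Fintype ι] {A : ι → Set Ω}
    [∀ ω k, Decidable (ω ∈ A k)]
    (hA : ∀ k, MeasurableSet (A k)) (hindep : iIndepFun (fun k => (A k).indicator (1 : Ω → ℝ)) μ)
    {p : ℝ} (hAp : ∀ k, μ.real (A k) ≤ p) {t : ℝ} (ht : 0 ≤ t) (m : ℝ) :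
    μ.real {ω | m ≤ #{k | ω ∈ A k}}
      ≤ exp (-t * m) * (1 + p * (exp t - 1)) ^ Fintype.card ι := by
  set S := ∑ k, (A k).indicator (1 : Ω → ℝ)
  have hS : ∀ ω, S ω = #{k | ω ∈ A k} := fun ω => by
    simp only [S, Finset.sum_apply, Set.indicator_apply, Pi.one_apply, natCast_card_filter]
  have hmeas : ∀ k, Measurable ((A k).indicator (1 : Ω → ℝ)) :=
    fun k => measurable_const.indicator (hA k)
  have hint : Integrable (fun ω => exp (t * S ω)) μ :=
    integrable_exp_mul_of_le t (Fintype.card ι) ht (by fun_prop)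
      (ae_of_all _ fun ω => hS ω ▸ mod_cast card_filter_le _ _)
  calc μ.real {ω | m ≤ #{k | ω ∈ A k}} = μ.real {ω | m ≤ S ω} := by simp_rw [hS]
    _ ≤ exp (-t * m) * mgf S μ t := measure_ge_le_exp_mul_mgf m ht hint
    _ = exp (-t * m) * ∏ k, (1 + μ.real (A k) * (exp t - 1)) := by
      rw [hindep.mgf_sum hmeas]
      simp only [mgf_indicator_one (hA _)]
    _ ≤ exp (-t * m) * (1 + p * (exp t - 1)) ^ Fintype.card ι := by
      have het : 0 ≤ exp t - 1 := by linarith [one_le_exp ht]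
      rw [← card_univ, ← prod_const]
      gcongr with k
      exact hAp k

theorem measureReal_half_le_card_filter_mem_le [Fintype ι] {A : ι → Set Ω}
    [∀ ω k, Decidable (ω ∈ A k)]
    (hA : ∀ k, MeasurableSet (A k)) (hindep : iIndepFun (fun k => (A k).indicator (1 : Ω → ℝ)) μ)
    {p : ℝ} (hp0 : 0 ≤ p) (hp : p ≤ 1 / 2) (hAp : ∀ k, μ.real (A k) ≤ p) :
    μ.real {ω | (Fintype.card ι : ℝ) / 2 ≤ #{k | ω ∈ A k}}
      ≤ exp (Fintype.card ι / 2 * log (4 * p * (1 - p))) := by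
  rcases hp0.eq_or_lt with rfl | hp0
  · simp
  have hodds : 1 ≤ (1 - p) / p := by rw [one_le_div hp0]; linarith
  rw [← exp_neg_log_odds_mul_pow hp0 (by linarith)]
  exact measureReal_le_card_filter_mem_le hA hindep hAp (log_nonneg hodds) _

end BernoulliCount

theorem stmt6_general
    {Ω : Type*} [MeasureSpace Ω] [IsProbabilityMeasure (ℙ : Measure Ω)]
    {K : ℕ} {σ : ℝ} (hσ : 0 < σ)
    (nk : Fin K → ℕ) (hnk : ∀ k, 1 ≤ nk k)
    (c : Fin K → Ω → ℝ) (hcmeas : ∀ k, Measurable (c k))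
    (hlaw : ∀ k, Measure.map (c k) ℙ
      = Measure.map (fun x => σ ^ 2 / (nk k : ℝ) * x) (gammaMeasure ((nk k : ℝ) / 2) (1 / 2)))
    (hindep : iIndepFun c ℙ)
    (n0 ninf : ℕ) (hn0 : IsLeast (Set.range nk) n0) (hninf : IsGreatest (Set.range nk) ninf)
    (t : ℝ) (ht1 : t ≤ 1)
    (p : ℝ)
    (hp : p = (gammaMeasure ((n0 : ℝ) / 2) (1 / 2)
        {x | x ≤ (n0 : ℝ) - (n0 : ℝ) * t}).toReal)
    (hphalf : p ≤ 1 / 2) :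
    ℙ {ω | sampleMedian (fun k => c k ω)
          ≤ ((n0 : ℝ) / (ninf : ℝ)) * σ ^ 2 - σ ^ 2 * ((n0 : ℝ) / (ninf : ℝ)) * t}
      ≤ ENNReal.ofReal (Real.exp ((K : ℝ) / 2 * Real.log (4 * p * (1 - p)))) := by
  classical
  set a := (n0 : ℝ) / ninf * σ ^ 2 - σ ^ 2 * ((n0 : ℝ) / ninf) * t
  set A : Fin K → Set Ω := fun k => c k ⁻¹' Set.Iic a
  have hA : ∀ k, MeasurableSet (A k) := fun k => hcmeas k measurableSet_Iic
  have hindepA : iIndepFun (fun k => (A k).indicator (1 : Ω → ℝ)) ℙ :=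
    hindep.comp (fun _ => (Set.Iic a).indicator 1) fun _ =>
      measurable_const.indicator measurableSet_Iic
  obtain ⟨k0, hk0⟩ := hn0.1
  have hn0pos : 1 ≤ n0 := hk0 ▸ hnk k0
  have : IsProbabilityMeasure (gammaMeasure ((n0 : ℝ) / 2) (1 / 2)) :=
    isProbabilityMeasure_gammaMeasure (by positivity) (by norm_num)
  have hAp : ∀ k, (ℙ : Measure Ω).real (A k) ≤ p := fun k => by
    rw [measureReal_def, hp, ← Measure.map_apply (hcmeas k) measurableSet_Iic, hlaw k]
    exact ENNReal.toReal_mono (measure_ne_top _ _) <| map_mul_gammaMeasure_Iic_le hσ.ne'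
      hn0pos (hn0.2 ⟨k, rfl⟩) (hninf.2 ⟨k, rfl⟩) ht1
  have hmedian :
      {ω | sampleMedian (fun k => c k ω) ≤ a} ⊆ {ω | (K : ℝ) / 2 ≤ #{k | ω ∈ A k}} :=
    fun ω hω => show (K : ℝ) / 2 ≤ _ by
      convert card_le_of_sampleMedian_le _ hω; rfl
  calc ℙ {ω | sampleMedian (fun k => c k ω) ≤ a}
      ≤ ℙ {ω | (K : ℝ) / 2 ≤ #{k | ω ∈ A k}} := measure_mono hmedian
    _ = ENNReal.ofReal ((ℙ : Measure Ω).real {ω | (K : ℝ) / 2 ≤ #{k | ω ∈ A k}}) :=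
      (ofReal_measureReal (measure_ne_top _ _)).symm
    _ ≤ _ := ENNReal.ofReal_le_ofReal <| by
      simpa using measureReal_half_le_card_filter_mem_le hA hindepA
        (hp ▸ ENNReal.toReal_nonneg) hphalf hAp

/-- Let `(c k)_{k < K}` (`K = K_f ≥ 1`) be independent random variables with
`c k ~ (σ²/n_k)·χ²(n_k)`, `n₀ = min_k n_k`, `n_∞ = max_k n_k`, `β = n₀/n_∞`, and let
`σ̂²_med` be the sample median of the `c k`.  For `0 ≤ t ≤ 1` with
`p⁻(t) = P(Γ_{n₀} ≤ n₀ − n₀ t) ≤ 1/2` (`Γ_{n₀} ~ χ²(n₀)`),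
`P(σ̂²_med ≤ βσ² − σ²β t) ≤ exp((K/2)·ln(4 p⁻(t)(1 − p⁻(t))))`. -/
theorem stmt6
    {Ω : Type*} [MeasureSpace Ω] [IsProbabilityMeasure (ℙ : Measure Ω)]
    {K : ℕ} (hK : 1 ≤ K) {σ : ℝ} (hσ : 0 < σ)
    (nk : Fin K → ℕ) (hnk : ∀ k, 1 ≤ nk k)
    (c : Fin K → Ω → ℝ) (hcmeas : ∀ k, Measurable (c k))
    (hlaw : ∀ k, Measure.map (c k) ℙ
      = Measure.map (fun x => σ ^ 2 / (nk k : ℝ) * x) (gammaMeasure ((nk k : ℝ) / 2) (1 / 2)))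
    (hindep : iIndepFun c ℙ)
    (n0 ninf : ℕ) (hn0 : IsLeast (Set.range nk) n0) (hninf : IsGreatest (Set.range nk) ninf)
    (t : ℝ) (ht : 0 ≤ t) (ht1 : t ≤ 1)
    (p : ℝ)
    (hp : p = (gammaMeasure ((n0 : ℝ) / 2) (1 / 2)
        {x | x ≤ (n0 : ℝ) - (n0 : ℝ) * t}).toReal)
    (hphalf : p ≤ 1 / 2) :
    ℙ {ω | sampleMedian (fun k => c k ω)
          ≤ ((n0 : ℝ) / (ninf : ℝ)) * σ ^ 2 - σ ^ 2 * ((n0 : ℝ) / (ninf : ℝ)) * t}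
      ≤ ENNReal.ofReal (Real.exp ((K : ℝ) / 2 * Real.log (4 * p * (1 - p)))) :=
  stmt6_general hσ nk hnk c hcmeas hlaw hindep n0 ninf hn0 hninf t ht1 p hp hphalf
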